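/- arXiv:1302.1986 — 4 statements merged into one kernel-verified Lean document; each statement's English description precedes it below -/
import Mathlib

section
/- Let A(x) and G(x) be formal power series with zero constant term over a commutative ring, with compositae A^Δ(n,k) = [x^n]A(x)^k and G^Δ(n,k) = [x^n]G(x)^k. Then the composita of the composition F(x) = G(A(x)) satisfies F^Δ(n,k) = Σ_{m=k}^{n} A^Δ(n,m) · G^Δ(m,k). -/
open PowerSeries Finset

/-- Composition `G(A(x))` of formal power series, valid when `A` has zero
constant term: the `n`-th coefficient is `∑_{m=0}^{n} [x^m]G · [x^n](A^m)`. -/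
noncomputable def PSComp {R : Type*} [CommRing R] (G A : PowerSeries R) : PowerSeries R :=
  PowerSeries.mk fun n => ∑ m ∈ range (n + 1), coeff m G * coeff n (A ^ m)

/-! `PSComp G A` is Mathlib's substitution `G.subst A`, which is a ring homomorphism in `G`;
hence `(G ∘ A)^k = G^k ∘ A`, and reading off the `n`-th coefficient of `G^k ∘ A` gives the
formula. The sum only runs over `k ≤ m ≤ n` because `A^m` and `G^k` have order at least
`m` and `k`. -/

namespace PowerSeries

variable {R : Type*} [CommRing R]

theorem coeff_pow_of_lt_of_constantCoeff_eq_zero {A : R⟦X⟧} (hA : constantCoeff A = 0)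
    {m n : ℕ} (h : n < m) : coeff n (A ^ m) = 0 :=
  coeff_of_lt_order n <|
    (Nat.cast_lt.mpr h).trans_le (le_order_pow_of_constantCoeff_eq_zero m hA)

theorem coeff_subst_eq_sum_range {A : R⟦X⟧} (hA : constantCoeff A = 0) (f : R⟦X⟧) (n : ℕ) :
    coeff n (f.subst A) = ∑ m ∈ range (n + 1), coeff m f * coeff n (A ^ m) := by
  rw [coeff_subst' (HasSubst.of_constantCoeff_zero' hA)]
  refine finsum_eq_sum_of_support_subset _ fun m hm => ?_
  rw [Function.mem_support] at hm
  rw [coe_range, Set.mem_Iio, Nat.lt_succ_iff]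
  by_contra! hnm
  exact hm (by rw [coeff_pow_of_lt_of_constantCoeff_eq_zero hA hnm, smul_zero])

theorem PSComp_eq_subst {A : R⟦X⟧} (hA : constantCoeff A = 0) (G : R⟦X⟧) :
    PSComp G A = G.subst A := by
  ext n
  rw [PSComp, coeff_mk, coeff_subst_eq_sum_range hA]

end PowerSeries

theorem stmt_3 {R : Type*} [CommRing R] (A G : PowerSeries R)
    (hA : constantCoeff A = 0) (hG : constantCoeff G = 0)
    (F : PowerSeries R) (hF : F = PSComp G A) (n k : ℕ) :
    coeff n (F ^ k) = ∑ m ∈ Icc k n, coeff n (A ^ m) * coeff m (G ^ k) := by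
  calc coeff n (F ^ k)
      = ∑ m ∈ range (n + 1), coeff m (G ^ k) * coeff n (A ^ m) := by
        rw [hF, PSComp_eq_subst hA, ← subst_pow (HasSubst.of_constantCoeff_zero' hA),
          coeff_subst_eq_sum_range hA]
    _ = ∑ m ∈ Icc k n, coeff m (G ^ k) * coeff n (A ^ m) := by
        refine (sum_subset (fun m hm => ?_) fun m hm hmk => ?_).symm
        · exact mem_range.mpr (Nat.lt_succ_of_le (mem_Icc.mp hm).2)
        · rw [mem_range, mem_Icc] at *
          rw [coeff_pow_of_lt_of_constantCoeff_eq_zero hG (by omega), zero_mul]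
    _ = ∑ m ∈ Icc k n, coeff n (A ^ m) * coeff m (G ^ k) :=
        sum_congr rfl fun _ _ => mul_comm _ _
end

section
/- Let A(x) be a formal power series with zero constant term over a commutative ring, satisfying A(A(x)) = F(x), and let A^Δ and F^Δ denote the respective compositae. Then for all n > k ≥ 1: A^Δ(n,k)·(A^Δ(k,k) + A^Δ(n,n)) = F^Δ(n,k) − Σ_{m=k+1}^{n−1} A^Δ(n,m)·A^Δ(m,k). -/
open PowerSeries Finset

/-
Since `A` has zero constant term, `G ↦ G ∘ A` is a ring homomorphism, so
`F^k = (A ∘ A)^k = A^k ∘ A` and `F^Δ(n,k) = ∑ₘ A^Δ(n,m) A^Δ(m,k)`: the composita of `F` is the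
matrix square of that of `A`. This matrix is lower triangular (`A^Δ(n,m) = 0` for `n < m`), so
only `k ≤ m ≤ n` contributes, and the terms `m = k` and `m = n` give the left-hand side.
-/

namespace PowerSeries

variable {R : Type*} [CommRing R] {A : R⟦X⟧}

theorem coeff_pow_eq_zero_of_lt (hA : constantCoeff A = 0) {m n : ℕ} (h : n < m) :
    coeff n (A ^ m) = 0 := by
  obtain ⟨B, rfl⟩ := X_dvd_iff.mpr hA
  rw [mul_pow, coeff_X_pow_mul', if_neg h.not_ge]

theorem psComp_eq_subst (hA : constantCoeff A = 0) (G : R⟦X⟧) : PSComp G A = G.subst A := by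
  ext n
  rw [PSComp, coeff_mk, coeff_subst' (HasSubst.of_constantCoeff_zero' hA)]
  refine (finsum_eq_sum_of_support_subset _ fun m hm => ?_).symm
  rw [coe_range, Set.mem_Iio, Nat.lt_succ_iff]
  by_contra! h
  exact hm (by simp only [coeff_pow_eq_zero_of_lt hA h, mul_zero])

theorem psComp_pow (hA : constantCoeff A = 0) (G : R⟦X⟧) (k : ℕ) :
    PSComp (G ^ k) A = PSComp G A ^ k := by
  rw [psComp_eq_subst hA, psComp_eq_subst hA, subst_pow (HasSubst.of_constantCoeff_zero' hA)]

theorem coeff_pow_psComp_self (hA : constantCoeff A = 0) (n k : ℕ) :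
    coeff n (PSComp A A ^ k) = ∑ m ∈ Icc k n, coeff n (A ^ m) * coeff m (A ^ k) := by
  rw [← psComp_pow hA, PSComp, coeff_mk]
  have hsupp : ∀ m ∈ range (n + 1), m ∉ Icc k n → coeff m (A ^ k) * coeff n (A ^ m) = 0 := by
    grind [coeff_pow_eq_zero_of_lt]
  rw [← sum_subset (fun m => by grind) hsupp]
  exact sum_congr rfl fun m _ => mul_comm _ _

end PowerSeries

theorem stmt_4_general {R : Type*} [CommRing R] (A F : PowerSeries R)
    (hA : constantCoeff A = 0) (hAF : PSComp A A = F)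
    (n k : ℕ) (hnk : k < n) :
    coeff n (A ^ k) * (coeff k (A ^ k) + coeff n (A ^ n)) =
      coeff n (F ^ k) - ∑ m ∈ Ioo k n, coeff n (A ^ m) * coeff m (A ^ k) := by
  rw [← hAF, coeff_pow_psComp_self hA, ← Ioc_insert_left hnk.le, sum_insert left_notMem_Ioc,
    ← Ioo_insert_right hnk, sum_insert right_notMem_Ioo]
  ring

theorem stmt_4 {R : Type*} [CommRing R] (A F : PowerSeries R)
    (hA : constantCoeff A = 0) (hAF : PSComp A A = F)
    (n k : ℕ) (hk : 1 ≤ k) (hnk : k < n) :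
    coeff n (A ^ k) * (coeff k (A ^ k) + coeff n (A ^ n)) =
      coeff n (F ^ k) - ∑ m ∈ Ioo k n, coeff n (A ^ m) * coeff m (A ^ k) :=
  stmt_4_general A F hA hAF n k hnk
end

section
/- Let F(x) = Σ_{n≥1} f(n)x^n be a formal power series over ℚ with f(1) = 1 and zero constant term. Then there exists a unique formal power series A(x) over ℚ with zero constant term, linear coefficient 1, and A(A(x)) = F(x). -/
/-!
Write `A = Σ aₘ xᵐ` with `a₀ = 0`. For `n ≥ 2` the coefficient `[xⁿ] A(A(x)) = Σₘ aₘ [xⁿ] Aᵐ`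
involves `aₙ` only through `a₁ · aₙ` and `aₙ · [xⁿ] Aⁿ = aₙ a₁ⁿ`: for `m ≥ 2`, `[xⁿ] Aᵐ` depends
only on `a₁, …, aₙ₋₁`, because `Aᵐ - Bᵐ` is divisible by `xⁿ⁺¹` whenever `A ≡ B mod xⁿ`.
So `[xⁿ] A(A(x)) = (a₁ + a₁ⁿ) aₙ + (a polynomial in a₁, …, aₙ₋₁)`, and with `a₁ = 1` the
equation `A(A(x)) = F(x)` determines each `aₙ = (fₙ - …) / 2` recursively and uniquely.
-/

open PowerSeries Finset

theorem pow_add_pred_dvd_pow_sub_pow {R : Type*} [CommRing R] {x a b : R} {n : ℕ}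
    (ha : x ∣ a) (hb : x ∣ b) (hab : x ^ n ∣ a - b) (m : ℕ) :
    x ^ (n + (m - 1)) ∣ a ^ m - b ^ m := by
  rw [← geom_sum₂_mul, pow_add, mul_comm (x ^ n)]
  refine mul_dvd_mul (dvd_sum fun i hi => ?_) hab
  rw [← Nat.add_sub_cancel' (Nat.le_sub_one_of_lt (mem_range.mp hi)), pow_add,
    Nat.add_sub_cancel_left]
  exact mul_dvd_mul (pow_dvd_pow_of_dvd ha i) (pow_dvd_pow_of_dvd hb _)

namespace PowerSeries

variable {R : Type*} [CommRing R]

theorem coeff_pow_eq_of_X_pow_dvd_sub {A B : R⟦X⟧} {n m : ℕ} (hA : constantCoeff A = 0)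
    (hB : constantCoeff B = 0) (hAB : X ^ n ∣ A - B) (hm : 2 ≤ m) :
    coeff n (A ^ m) = coeff n (B ^ m) := by
  have := X_pow_dvd_iff.mp
    (pow_add_pred_dvd_pow_sub_pow (X_dvd_iff.mpr hA) (X_dvd_iff.mpr hB) hAB m) n (by omega)
  rwa [map_sub, sub_eq_zero] at this

theorem coeff_pow_self_of_constantCoeff_eq_zero {A : R⟦X⟧} (hA : constantCoeff A = 0)
    (n : ℕ) : coeff n (A ^ n) = coeff 1 A ^ n := by
  obtain ⟨B, rfl⟩ := X_dvd_iff.mpr hA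
  rw [mul_pow, coeff_X_pow_mul', if_pos le_rfl, Nat.sub_self, coeff_zero_eq_constantCoeff_apply,
    map_pow, coeff_succ_X_mul, coeff_zero_eq_constantCoeff_apply]

theorem X_pow_dvd_sub_trunc (A : R⟦X⟧) (n : ℕ) : X ^ n ∣ A - (trunc n A : R⟦X⟧) :=
  X_pow_dvd_iff.mpr fun m hm => by rw [map_sub, coeff_coe_trunc_of_lt hm, sub_self]

theorem coeff_zero_PSComp (G A : R⟦X⟧) : coeff 0 (PSComp G A) = coeff 0 G := by
  simp [PSComp]

theorem coeff_one_PSComp (G A : R⟦X⟧) : coeff 1 (PSComp G A) = coeff 1 G * coeff 1 A := by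
  simp [PSComp, sum_range_succ]

theorem coeff_PSComp_self_eq {A : R⟦X⟧} (hA : constantCoeff A = 0) {n : ℕ} (hn : 2 ≤ n) :
    coeff n (PSComp A A) = coeff n (PSComp (trunc n A : R⟦X⟧) (trunc n A)) +
      (coeff 1 A + coeff 1 A ^ n) * coeff n A := by
  obtain ⟨k, rfl⟩ : ∃ k, n = k + 2 := ⟨n - 2, by omega⟩
  set B : R⟦X⟧ := (trunc (k + 2) A : R⟦X⟧)
  have hBA : ∀ m < k + 2, coeff m B = coeff m A := fun m hm => coeff_coe_trunc_of_lt hm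
  have hBn : coeff (k + 2) B = 0 := by simp [B, coeff_trunc]
  have hB0 : constantCoeff B = 0 := by
    rw [← coeff_zero_eq_constantCoeff_apply, hBA 0 (by omega), coeff_zero_eq_constantCoeff_apply,
      hA]
  have hpow : ∀ m, 2 ≤ m → coeff (k + 2) (B ^ m) = coeff (k + 2) (A ^ m) := fun m hm =>
    coeff_pow_eq_of_X_pow_dvd_sub hB0 hA (dvd_sub_comm.mp (X_pow_dvd_sub_trunc A _)) hm
  have hmid : ∑ i ∈ range k, coeff (i + 2) B * coeff (k + 2) (B ^ (i + 2)) =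
      ∑ i ∈ range k, coeff (i + 2) A * coeff (k + 2) (A ^ (i + 2)) :=
    sum_congr rfl fun i hi => by
      rw [hBA _ (by simp at hi; omega), hpow _ le_add_self]
  simp only [PSComp, coeff_mk, sum_range_succ _ (k + 2), sum_range_succ' _ (k + 1),
    sum_range_succ' _ k, add_assoc, Nat.reduceAdd, hmid, zero_add, pow_one, hBn, hBA 1 (by omega),
    pow_zero, coeff_one, if_neg (Nat.succ_ne_zero (k + 1)),
    coeff_pow_self_of_constantCoeff_eq_zero hA]
  ring

theorem eq_of_PSComp_self_eq [IsDomain R] [NeZero (2 : R)] {A B : R⟦X⟧}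
    (hA₀ : constantCoeff A = 0) (hA₁ : coeff 1 A = 1) (hB₀ : constantCoeff B = 0)
    (hB₁ : coeff 1 B = 1) (h : PSComp A A = PSComp B B) : A = B := by
  ext n
  induction n using Nat.strong_induction_on with
  | _ n ih =>
    match n, ih with
    | 0, _ =>
      rw [coeff_zero_eq_constantCoeff_apply, coeff_zero_eq_constantCoeff_apply, hA₀, hB₀]
    | 1, _ => rw [hA₁, hB₁]
    | n + 2, ih =>
      have htrunc : trunc (n + 2) A = trunc (n + 2) B := Polynomial.ext fun m => by
        simp only [coeff_trunc]
        split_ifs with hm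
        exacts [ih m hm, rfl]
      have hn := congr(coeff (n + 2) $h)
      rw [coeff_PSComp_self_eq hA₀ (by omega), coeff_PSComp_self_eq hB₀ (by omega), htrunc, hA₁,
        hB₁, one_pow, add_right_inj, one_add_one_eq_two] at hn
      exact mul_left_cancel₀ two_ne_zero hn

section HalfIterate

variable {K : Type*} [Field K]

noncomputable def halfIterateCoeff (F : K⟦X⟧) : ℕ → K
  | 0 => 0
  | 1 => 1
  | n + 2 =>
    -- `T` is the truncation below degree `n + 2`, written so that the recursion visibly terminates
    let T : K⟦X⟧ := mk fun k => if _ : k < n + 2 then halfIterateCoeff F k else 0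
    (coeff (n + 2) F - coeff (n + 2) (PSComp T T)) / 2

noncomputable def halfIterate (F : K⟦X⟧) : K⟦X⟧ := mk (halfIterateCoeff F)

theorem constantCoeff_halfIterate (F : K⟦X⟧) : constantCoeff (halfIterate F) = 0 := by
  rw [← coeff_zero_eq_constantCoeff_apply, halfIterate, coeff_mk, halfIterateCoeff]

theorem coeff_one_halfIterate (F : K⟦X⟧) : coeff 1 (halfIterate F) = 1 := by
  rw [halfIterate, coeff_mk, halfIterateCoeff]

theorem coeff_halfIterate_add_two (F : K⟦X⟧) (n : ℕ) :
    coeff (n + 2) (halfIterate F) = (coeff (n + 2) F - coeff (n + 2)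
      (PSComp (trunc (n + 2) (halfIterate F) : K⟦X⟧) (trunc (n + 2) (halfIterate F)))) / 2 := by
  have hT : (trunc (n + 2) (halfIterate F) : K⟦X⟧) =
      mk fun k => if _ : k < n + 2 then halfIterateCoeff F k else 0 := by
    ext k
    simp [coeff_trunc, halfIterate]
  rw [hT, halfIterate, coeff_mk, halfIterateCoeff]

theorem PSComp_halfIterate_self [NeZero (2 : K)] {F : K⟦X⟧} (hF₀ : constantCoeff F = 0)
    (hF₁ : coeff 1 F = 1) : PSComp (halfIterate F) (halfIterate F) = F := by
  ext n
  match n with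
  | 0 => rw [coeff_zero_PSComp, coeff_zero_eq_constantCoeff_apply,
      coeff_zero_eq_constantCoeff_apply, constantCoeff_halfIterate, hF₀]
  | 1 => rw [coeff_one_PSComp, coeff_one_halfIterate, hF₁, mul_one]
  | n + 2 =>
    rw [coeff_PSComp_self_eq (constantCoeff_halfIterate F) (by omega), coeff_one_halfIterate,
      coeff_halfIterate_add_two]
    field_simp
    ring

end HalfIterate

end PowerSeries

theorem stmt_5 (F : PowerSeries ℚ) (hF0 : constantCoeff F = 0)
    (hF1 : coeff 1 F = 1) :
    ∃! A : PowerSeries ℚ,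
      constantCoeff A = 0 ∧ coeff 1 A = 1 ∧ PSComp A A = F := by
  have hF := PSComp_halfIterate_self hF0 hF1
  refine ⟨halfIterate F, ⟨constantCoeff_halfIterate F, coeff_one_halfIterate F, hF⟩, ?_⟩
  rintro B ⟨hB₀, hB₁, hBF⟩
  exact eq_of_PSComp_self_eq hB₀ hB₁ (constantCoeff_halfIterate F) (coeff_one_halfIterate F)
    (hBF.trans hF.symm)
end

section
/- Let C(x) = (1 − √(1−4x))/2 be the generating function of the Catalan numbers, viewed as the formal power series satisfying C(x) = x + C(x)^2 with zero constant term. Then its composita is C^Δ(n,k) = (k/n)·binom(2n−k−1, n−1) for 1 ≤ k ≤ n; i.e., the coefficient of x^n in C(x)^k equals (k/n)·binom(2n−k−1, n−1). -/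
/-!
Write `C = X * c`; then `c = 1 + X * c ^ 2`, so `c ^ (j + 1) = c ^ j + X * c ^ (j + 2)`, which gives
the recurrence `[x^(d+1)] c^(j+1) = [x^(d+1)] c^j + [x^d] c^(j+2)` with `[x^0] c^j = 1`.
The ballot numbers `j / (d + j) * binom(2d + j - 1, d + j - 1)` satisfy the same recurrence
(Pascal's rule plus one ratio of neighbouring binomials), so by induction on `d` they are the
coefficients of `c ^ j`, and `[x^n] C^k = [x^(n-k)] c^k`.
-/

open PowerSeries

/-- For `j ≥ 1` this is `(j / (2d + j)) * binom(2d + j, d)`; `ballot 0 0 = 0` is a junk value. -/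
def ballot {K : Type*} [Field K] (j d : ℕ) : K :=
  (j : K) / (d + j) * ((2 * d + j - 1).choose (d + j - 1) : K)

section Ballot

variable {K : Type*} [Field K] [CharZero K]

theorem ballot_zero_right {j : ℕ} (hj : j ≠ 0) : (ballot j 0 : K) = 1 := by
  have hj' : (j : K) ≠ 0 := Nat.cast_ne_zero.mpr hj
  simp [ballot, hj']

theorem ballot_succ_succ (j d : ℕ) :
    (ballot (j + 1) (d + 1) : K) = ballot j (d + 1) + ballot (j + 2) d := by
  have hpascal := Nat.choose_succ_succ' (2 * d + j + 1) (d + j)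
  have hratio := Nat.choose_succ_right_eq (2 * d + j + 1) (d + j)
  rw [show 2 * d + j + 1 - (d + j) = d + 1 by omega] at hratio
  simp only [ballot, show 2 * (d + 1) + (j + 1) - 1 = 2 * d + j + 1 + 1 by omega,
    show d + 1 + (j + 1) - 1 = d + j + 1 by omega, show 2 * (d + 1) + j - 1 = 2 * d + j + 1 by omega,
    show d + 1 + j - 1 = d + j by omega, show 2 * d + (j + 2) - 1 = 2 * d + j + 1 by omega,
    show d + (j + 2) - 1 = d + j + 1 by omega, hpascal]
  have hratio' := congrArg (Nat.cast : ℕ → K) hratio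
  push_cast at hratio' ⊢
  have h1 : (d : K) + 1 + j ≠ 0 := by norm_cast; omega
  have h2 : (d : K) + 1 + (j + 1) ≠ 0 := by norm_cast
  have h3 : (d : K) + (j + 2) ≠ 0 := by norm_cast
  field_simp
  linear_combination (-((d : K) + j + 2)) * hratio'

end Ballot

section CatalanEquation

variable {R : Type*} [CommRing R]

theorem exists_eq_X_mul_of_eq_X_add_sq {C : R⟦X⟧} (h0 : constantCoeff C = 0)
    (hC : C = X + C ^ 2) : ∃ c : R⟦X⟧, C = X * c ∧ c = 1 + X * c ^ 2 := by
  obtain ⟨c, rfl⟩ := X_dvd_iff.mpr h0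
  refine ⟨c, rfl, X_mul_cancel ?_⟩
  linear_combination hC

theorem constantCoeff_eq_one_of_eq_one_add_X_mul_sq {c : R⟦X⟧} (hc : c = 1 + X * c ^ 2) :
    constantCoeff c = 1 := by
  rw [hc]
  simp

theorem coeff_succ_pow_succ_of_eq_one_add_X_mul_sq {c : R⟦X⟧} (hc : c = 1 + X * c ^ 2)
    (j d : ℕ) : coeff (d + 1) (c ^ (j + 1)) = coeff (d + 1) (c ^ j) + coeff d (c ^ (j + 2)) := by
  have hpow : c ^ (j + 1) = c ^ j + X * c ^ (j + 2) :=
    calc c ^ (j + 1) = c ^ j * (1 + X * c ^ 2) := by rw [← hc, pow_succ]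
      _ = c ^ j + X * c ^ (j + 2) := by ring
  rw [hpow, map_add, coeff_succ_X_mul]

end CatalanEquation

theorem coeff_pow_eq_ballot {K : Type*} [Field K] [CharZero K] {c : K⟦X⟧}
    (hc : c = 1 + X * c ^ 2) (d : ℕ) {j : ℕ} (hj : j ≠ 0) : coeff d (c ^ j) = ballot j d := by
  induction d generalizing j with
  | zero =>
    rw [coeff_zero_eq_constantCoeff_apply, map_pow,
      constantCoeff_eq_one_of_eq_one_add_X_mul_sq hc, one_pow, ballot_zero_right hj]
  | succ d ih =>
    clear hj
    induction j with
    | zero => simp [ballot, coeff_one]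
    | succ j ihj =>
      rw [coeff_succ_pow_succ_of_eq_one_add_X_mul_sq hc, ihj, ih (by omega), ballot_succ_succ]

theorem stmt_10 (Cat : PowerSeries ℚ) (h0 : constantCoeff Cat = 0)
    (hCat : Cat = X + Cat ^ 2) (n k : ℕ) (hk : 1 ≤ k) (hkn : k ≤ n) :
    coeff n (Cat ^ k) =
      ((k : ℚ) / (n : ℚ)) * ((2 * n - k - 1).choose (n - 1) : ℚ) := by
  obtain ⟨c, rfl, hc⟩ := exists_eq_X_mul_of_eq_X_add_sq h0 hCat
  obtain ⟨d, rfl⟩ := Nat.exists_eq_add_of_le' hkn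
  rw [mul_pow, coeff_X_pow_mul, coeff_pow_eq_ballot hc d (by omega), ballot,
    show 2 * (d + k) - k - 1 = 2 * d + k - 1 by omega]
  push_cast
  rfl
end
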